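/- arXiv:0910.1407 — 2 statements merged into one kernel-verified Lean document; each statement's English description precedes it below -/
import Mathlib

section
/- Suppose a channel p(y,z|x) satisfies the degradedness Markov chain X → Y → Z. Then for every joint distribution p(v,x) on V × X (with the channel applied to X), I(V;Y) - I(V;Z) ≤ I(X;Y) - I(X;Z). -/
open scoped BigOperators Classical

namespace Secrecy

/-- `-x log₂ x`, with the convention `0 log 0 = 0`. -/
noncomputable def nml (x : ℝ) : ℝ := - x * Real.logb 2 x

variable {Ω : Type} [Fintype Ω]

/-- Probability of an event under a pmf on a finite sample space. -/
noncomputable def pr (p : Ω → ℝ) (s : Ω → Prop) : ℝ := ∑ ω, if s ω then p ω else 0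

/-- `p` is a probability mass function. -/
def IsPMF (p : Ω → ℝ) : Prop := (∀ ω, 0 ≤ p ω) ∧ ∑ ω, p ω = 1

/-- Shannon entropy (base 2) of a finitely valued random variable. -/
noncomputable def H {A : Type} [Fintype A] (p : Ω → ℝ) (X : Ω → A) : ℝ :=
  ∑ a, nml (pr p (fun ω => X ω = a))

/-- Conditional entropy `H(X|Y) = H(X,Y) - H(Y)`. -/
noncomputable def Hc {A B : Type} [Fintype A] [Fintype B] (p : Ω → ℝ)
    (X : Ω → A) (Y : Ω → B) : ℝ :=
  H p (fun ω => (X ω, Y ω)) - H p Y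

/-- Mutual information `I(X;Y)`. -/
noncomputable def MI {A B : Type} [Fintype A] [Fintype B] (p : Ω → ℝ)
    (X : Ω → A) (Y : Ω → B) : ℝ :=
  H p X + H p Y - H p (fun ω => (X ω, Y ω))

/-- Conditional mutual information `I(X;Y|Z)`. -/
noncomputable def CMI {A B C : Type} [Fintype A] [Fintype B] [Fintype C]
    (p : Ω → ℝ) (X : Ω → A) (Y : Ω → B) (Z : Ω → C) : ℝ :=
  H p (fun ω => (X ω, Z ω)) + H p (fun ω => (Y ω, Z ω))
    - H p (fun ω => (X ω, Y ω, Z ω)) - H p Z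

/-- Markov chain `X → Y → Z` : `X` and `Z` are conditionally independent given `Y`. -/
def Markov {A B C : Type} (p : Ω → ℝ) (X : Ω → A) (Y : Ω → B) (Z : Ω → C) : Prop :=
  ∀ a b c,
    pr p (fun ω => X ω = a ∧ Y ω = b ∧ Z ω = c) * pr p (fun ω => Y ω = b) =
    pr p (fun ω => X ω = a ∧ Y ω = b) * pr p (fun ω => Y ω = b ∧ Z ω = c)

/-- The past `Y^{i-1}` of a random sequence, as a finitely valued random variable. -/
noncomputable def past {n : ℕ} {A : Type} (Y : Ω → Fin n → A) (i : Fin n) :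
    Ω → (Fin n → Option A) :=
  fun ω j => if j < i then some (Y ω j) else none

/-- The future `Z_{i+1}^n` of a random sequence, as a finitely valued random variable. -/
noncomputable def future {n : ℕ} {A : Type} (Z : Ω → Fin n → A) (i : Fin n) :
    Ω → (Fin n → Option A) :=
  fun ω j => if i < j then some (Z ω j) else none

/-- A discrete memoryless channel from `A` to `B`: a conditional pmf. -/
def IsChannel {A B : Type} [Fintype B] (W : A → B → ℝ) : Prop :=
  (∀ a b, 0 ≤ W a b) ∧ ∀ a, ∑ b, W a b = 1

/-- Joint pmf of an input distribution `q(u,x)` and a channel `W(o|x)`. -/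
noncomputable def joint {U X O : Type} (q : U × X → ℝ) (W : X → O → ℝ) :
    U × X × O → ℝ :=
  fun w => q (w.1, w.2.1) * W w.2.1 w.2.2

/-- `Y` is less noisy than `Z` for the channel `W(y,z|x)` : for every auxiliary `U` with
`U → X → (Y,Z)`, i.e. every joint input pmf `q(u,x)`, `I(U;Y) ≥ I(U;Z)`. -/
def LessNoisy {X Y Z : Type} [Fintype X] [Fintype Y] [Fintype Z]
    (W : X → Y × Z → ℝ) : Prop :=
  ∀ (U : Type) (_ : Fintype U) (q : U × X → ℝ), IsPMF q →
    MI (joint q W) (fun w => w.1) (fun w => w.2.2.2) ≤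
    MI (joint q W) (fun w => w.1) (fun w => w.2.2.1)

/-- `Y` is more capable than `Z` for the channel `W(y,z|x)` : `I(X;Y) ≥ I(X;Z)` for
every input pmf `q(x)`. -/
def MoreCapable {X Y Z : Type} [Fintype X] [Fintype Y] [Fintype Z]
    (W : X → Y × Z → ℝ) : Prop :=
  ∀ q : X → ℝ, IsPMF q →
    MI (fun w : X × Y × Z => q w.1 * W w.1 w.2) (fun w => w.1) (fun w => w.2.2) ≤
    MI (fun w : X × Y × Z => q w.1 * W w.1 w.2) (fun w => w.1) (fun w => w.2.1)

/-- Conditional pmf given an event. -/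
noncomputable def condp (p : Ω → ℝ) (s : Ω → Prop) : Ω → ℝ :=
  fun ω => if s ω then p ω / pr p s else 0

/-- Number of occurrences of `v` in the sequence `vs`. -/
noncomputable def Nocc {n : ℕ} {V : Type} (vs : Fin n → V) (v : V) : ℕ :=
  (Finset.univ.filter (fun i => vs i = v)).card

/-- Binary entropy (base 2). -/
noncomputable def binEnt (γ : ℝ) : ℝ := nml γ + nml (1 - γ)

end Secrecy

/-!
Writing `H(X) = -E[log₂ p_X(X)]`, any difference of two sums of two entropies becomes the
expectation of the logarithm of a ratio of atom probabilities. For a Markov chain `A → B → C`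
that ratio is `1`, giving `H(A,B) + H(B,C) = H(A,B,C) + H(B)`; for `I(A;B|C)` it is the
likelihood ratio against `p(a,c)p(b,c)/p(c)`, a sub-probability, so Gibbs' inequality gives
`I(A;B|C) ≥ 0`.

Since `V → X → Y` and `V → X → Z`, the chain rule gives `I(X;Y) = I(V;Y) + I(X;Y|V)` and the
same with `Z`, so the claim reduces to `I(X;Z|V) ≤ I(X;Y|V)`. This is data processing given `V`:
`I(X;Z|V) + I(X;Y|Z,V) + I(V;Z|Y) = I(X;Y|V) + I(V,X;Z|Y)`, and the last term vanishes for the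
chain `(V,X) → Y → Z`.
-/

namespace Secrecy

open Finset Real

variable {Ω : Type} [Fintype Ω] {p : Ω → ℝ}

lemma pr_nonneg (hp : ∀ ω, 0 ≤ p ω) (s : Ω → Prop) : 0 ≤ pr p s :=
  sum_nonneg fun ω _ => by split_ifs <;> simp [hp ω]

lemma le_pr (hp : ∀ ω, 0 ≤ p ω) {s : Ω → Prop} {ω : Ω} (hω : s ω) : p ω ≤ pr p s := by
  unfold pr
  simpa [hω] using single_le_sum (f := fun ω => if s ω then p ω else 0)
    (fun ω _ => by split_ifs <;> simp [hp ω]) (mem_univ ω)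

lemma sum_pr_mul {α : Type} [Fintype α] (X : Ω → α) (f : α → ℝ) :
    ∑ a, pr p (fun ω => X ω = a) * f a = ∑ ω, p ω * f (X ω) := by
  simp only [pr, sum_mul, ite_mul, zero_mul]
  rw [sum_comm]
  simp

lemma sum_pr_and {α : Type} [Fintype α] (X : Ω → α) (s : Ω → Prop) :
    ∑ a, pr p (fun ω => X ω = a ∧ s ω) = pr p s := by
  simp only [pr]
  rw [sum_comm]
  refine sum_congr rfl fun ω _ => ?_
  by_cases hs : s ω <;> simp [hs]

lemma pr_and_comp_eq_sum {γ δ : Type} [Fintype γ] (s : Ω → Prop) (C : Ω → γ) (f : γ → δ)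
    (d : δ) :
    pr p (fun ω => s ω ∧ f (C ω) = d) = ∑ c with f c = d, pr p (fun ω => s ω ∧ C ω = c) := by
  simp only [pr]
  rw [sum_comm]
  refine sum_congr rfl fun ω _ => ?_
  by_cases hs : s ω <;> simp [hs]

theorem Markov.comp_right {α β γ δ : Type} [Fintype γ] {A : Ω → α} {B : Ω → β} {C : Ω → γ}
    (h : Markov p A B C) (f : γ → δ) : Markov p A B (fun ω => f (C ω)) := by
  intro a b d
  have hABC := pr_and_comp_eq_sum (p := p) (fun ω => A ω = a ∧ B ω = b) C f d
  have hBC := pr_and_comp_eq_sum (p := p) (fun ω => B ω = b) C f d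
  simp only [and_assoc] at hABC
  rw [hABC, hBC, sum_mul, mul_sum]
  exact sum_congr rfl fun c _ => h a b c

noncomputable def atomProb {α : Type} (p : Ω → ℝ) (X : Ω → α) (ω : Ω) : ℝ :=
  pr p fun ω' => X ω' = X ω

lemma atomProb_pos {α : Type} (hp : ∀ ω, 0 ≤ p ω) (X : Ω → α) {ω : Ω} (hω : 0 < p ω) :
    0 < atomProb p X ω :=
  hω.trans_le (le_pr hp rfl)

lemma H_eq_neg_sum_mul_logb {α : Type} [Fintype α] (X : Ω → α) :
    H p X = -∑ ω, p ω * logb 2 (atomProb p X ω) := by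
  simp only [H, nml, neg_mul, sum_neg_distrib, atomProb,
    sum_pr_mul X fun a => logb 2 (pr p fun ω => X ω = a)]

lemma H_congr {α β : Type} [Fintype α] [Fintype β] {X : Ω → α} {Y : Ω → β}
    (h : ∀ ω ω', X ω' = X ω ↔ Y ω' = Y ω) : H p X = H p Y := by
  simp only [H_eq_neg_sum_mul_logb, atomProb, h]

lemma H_add_H_sub_H_add_H {α β γ δ : Type} [Fintype α] [Fintype β] [Fintype γ] [Fintype δ]
    (hp : ∀ ω, 0 ≤ p ω) (X₁ : Ω → α) (X₂ : Ω → β) (Y₁ : Ω → γ) (Y₂ : Ω → δ) :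
    H p Y₁ + H p Y₂ - (H p X₁ + H p X₂) =
      (∑ ω, p ω * log (atomProb p X₁ ω * atomProb p X₂ ω /
        (atomProb p Y₁ ω * atomProb p Y₂ ω))) / log 2 := by
  have term : ∀ ω, p ω * log (atomProb p X₁ ω * atomProb p X₂ ω /
      (atomProb p Y₁ ω * atomProb p Y₂ ω)) / log 2 =
      p ω * logb 2 (atomProb p X₁ ω) + p ω * logb 2 (atomProb p X₂ ω)
        - p ω * logb 2 (atomProb p Y₁ ω) - p ω * logb 2 (atomProb p Y₂ ω) := by
    intro ω
    rcases (hp ω).eq_or_lt with h0 | h0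
    · simp [← h0]
    · have := atomProb_pos hp X₁ h0
      have := atomProb_pos hp X₂ h0
      have := atomProb_pos hp Y₁ h0
      have := atomProb_pos hp Y₂ h0
      rw [log_div (by positivity) (by positivity), log_mul (by positivity) (by positivity),
        log_mul (by positivity) (by positivity)]
      simp only [logb]
      ring
  simp only [H_eq_neg_sum_mul_logb, sum_div, term, sum_add_distrib, sum_sub_distrib]
  ring

lemma sum_sub_sum_div_le_sum_mul_log (hp : ∀ ω, 0 ≤ p ω) {r : Ω → ℝ}
    (hr : ∀ ω, 0 < p ω → 0 < r ω) :
    ∑ ω, p ω - ∑ ω, p ω / r ω ≤ ∑ ω, p ω * log (r ω) := by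
  rw [← sum_sub_distrib]
  refine sum_le_sum fun ω _ => ?_
  rcases (hp ω).eq_or_lt with h0 | h0
  · simp [← h0]
  · calc p ω - p ω / r ω = p ω * (1 - (r ω)⁻¹) := by ring
      _ ≤ p ω * log (r ω) :=
        mul_le_mul_of_nonneg_left (one_sub_inv_le_log_of_pos (hr ω h0)) h0.le

lemma sum_mul_div_atomProb_le {α : Type} [Fintype α] (hp : ∀ ω, 0 ≤ p ω) (T : Ω → α)
    {F : α → ℝ} (hF : ∀ t, 0 ≤ F t) :
    ∑ ω, p ω * (F (T ω) / atomProb p T ω) ≤ ∑ t, F t := by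
  unfold atomProb
  rw [← sum_pr_mul T fun t => F t / pr p fun ω => T ω = t]
  refine sum_le_sum fun t _ => ?_
  rcases (pr_nonneg hp fun ω => T ω = t).eq_or_lt with h0 | h0
  · rw [← h0, zero_mul]
    exact hF t
  · rw [mul_div_cancel₀ _ h0.ne']

lemma sum_pr_mul_pr_div_pr {α β γ : Type} [Fintype α] [Fintype β] [Fintype γ]
    (A : Ω → α) (B : Ω → β) (C : Ω → γ) :
    ∑ t : γ × α × β, pr p (fun ω => (A ω, C ω) = (t.2.1, t.1)) *
      pr p (fun ω => (B ω, C ω) = (t.2.2, t.1)) / pr p (fun ω => C ω = t.1) = ∑ ω, p ω := by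
  have marg : ∀ {ε : Type} [Fintype ε] (X : Ω → ε) (c : γ),
      ∑ a, pr p (fun ω => (X ω, C ω) = (a, c)) = pr p fun ω => C ω = c := fun X c => by
    simpa only [Prod.mk.injEq] using sum_pr_and X fun ω => C ω = c
  calc _ = ∑ c, (∑ a, pr p (fun ω => (A ω, C ω) = (a, c))) *
        (∑ b, pr p (fun ω => (B ω, C ω) = (b, c))) / pr p (fun ω => C ω = c) := by
        simp only [Fintype.sum_prod_type, sum_mul_sum, sum_div]
    _ = ∑ c, pr p (fun ω => C ω = c) := by simp only [marg, mul_self_div_self]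
    _ = ∑ ω, p ω := by simpa using sum_pr_mul (p := p) C fun _ => 1

theorem CMI_nonneg {α β γ : Type} [Fintype α] [Fintype β] [Fintype γ] (hp : ∀ ω, 0 ≤ p ω)
    (A : Ω → α) (B : Ω → β) (C : Ω → γ) : 0 ≤ CMI p A B C := by
  set T := fun ω => (C ω, A ω, B ω)
  set r := fun ω => atomProb p T ω * atomProb p C ω /
    (atomProb p (fun ω => (A ω, C ω)) ω * atomProb p (fun ω => (B ω, C ω)) ω)
  have hperm : H p (fun ω => (A ω, B ω, C ω)) = H p T :=
    H_congr fun _ _ => by simp only [T, Prod.mk.injEq]; tauto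
  have hsplit := H_add_H_sub_H_add_H hp T C (fun ω => (A ω, C ω)) (fun ω => (B ω, C ω))
  have hgibbs : ∑ ω, p ω - ∑ ω, p ω / r ω ≤ ∑ ω, p ω * log (r ω) :=
    sum_sub_sum_div_le_sum_mul_log hp fun ω hω => by
      have := atomProb_pos hp T hω
      have := atomProb_pos hp C hω
      have := atomProb_pos hp (fun ω => (A ω, C ω)) hω
      have := atomProb_pos hp (fun ω => (B ω, C ω)) hω
      positivity
  have hbound : ∑ ω, p ω / r ω ≤ ∑ ω, p ω := by
    have hsum := sum_mul_div_atomProb_le hp T (F := fun t => pr p (fun ω => (A ω, C ω)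
      = (t.2.1, t.1)) * pr p (fun ω => (B ω, C ω) = (t.2.2, t.1)) / pr p fun ω => C ω = t.1)
      fun t => div_nonneg (mul_nonneg (pr_nonneg hp _) (pr_nonneg hp _)) (pr_nonneg hp _)
    rw [sum_pr_mul_pr_div_pr] at hsum
    convert hsum using 3 with ω
    simp only [r, T, atomProb, div_div_eq_mul_div]
    ring
  rw [CMI, hperm]
  have : 0 ≤ (∑ ω, p ω * log (r ω)) / log 2 := div_nonneg (by linarith) (log_nonneg one_le_two)
  linarith

theorem Markov.H_add_H_eq {α β γ : Type} [Fintype α] [Fintype β] [Fintype γ]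
    (hp : ∀ ω, 0 ≤ p ω) {A : Ω → α} {B : Ω → β} {C : Ω → γ} (h : Markov p A B C) :
    H p (fun ω => (A ω, B ω)) + H p (fun ω => (B ω, C ω)) =
      H p (fun ω => (A ω, B ω, C ω)) + H p B := by
  have hsplit := H_add_H_sub_H_add_H hp (fun ω => (A ω, B ω, C ω)) B
    (fun ω => (A ω, B ω)) (fun ω => (B ω, C ω))
  have hterm : ∀ ω, p ω * log (atomProb p (fun ω => (A ω, B ω, C ω)) ω * atomProb p B ω /
      (atomProb p (fun ω => (A ω, B ω)) ω * atomProb p (fun ω => (B ω, C ω)) ω)) = 0 := by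
    intro ω
    rcases (hp ω).eq_or_lt with h0 | h0
    · simp [← h0]
    · have hAB := atomProb_pos hp (fun ω => (A ω, B ω)) h0
      have hBC := atomProb_pos hp (fun ω => (B ω, C ω)) h0
      have hmarkov : atomProb p (fun ω => (A ω, B ω, C ω)) ω * atomProb p B ω =
          atomProb p (fun ω => (A ω, B ω)) ω * atomProb p (fun ω => (B ω, C ω)) ω := by
        simpa only [atomProb, Prod.mk.injEq] using h (A ω) (B ω) (C ω)
      rw [hmarkov, div_self (by positivity), log_one, mul_zero]
  simp only [hterm, sum_const_zero, zero_div] at hsplit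
  linarith

theorem Markov.MI_eq_MI_add_CMI {α β γ : Type} [Fintype α] [Fintype β] [Fintype γ]
    (hp : ∀ ω, 0 ≤ p ω) {V : Ω → α} {X : Ω → β} {Y : Ω → γ} (h : Markov p V X Y) :
    MI p X Y = MI p V Y + CMI p X Y V := by
  have hmarkov := h.H_add_H_eq hp
  have hXV : H p (fun ω => (X ω, V ω)) = H p (fun ω => (V ω, X ω)) :=
    H_congr fun _ _ => by simp only [Prod.mk.injEq]; tauto
  have hYV : H p (fun ω => (Y ω, V ω)) = H p (fun ω => (V ω, Y ω)) :=
    H_congr fun _ _ => by simp only [Prod.mk.injEq]; tauto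
  have hXYV : H p (fun ω => (X ω, Y ω, V ω)) = H p (fun ω => (V ω, X ω, Y ω)) :=
    H_congr fun _ _ => by simp only [Prod.mk.injEq]; tauto
  simp only [MI, CMI]
  linarith

theorem Markov.CMI_le_CMI {α β γ δ : Type} [Fintype α] [Fintype β] [Fintype γ] [Fintype δ]
    (hp : ∀ ω, 0 ≤ p ω) {V : Ω → α} {X : Ω → β} {Y : Ω → γ} {Z : Ω → δ}
    (h : Markov p (fun ω => (V ω, X ω)) Y Z) :
    CMI p X Z V ≤ CMI p X Y V := by
  have hmarkov := h.H_add_H_eq hp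
  have hXY_ZV := CMI_nonneg hp X Y fun ω => (Z ω, V ω)
  have hZV_Y := CMI_nonneg hp Z V Y
  have h₁ : H p (fun ω => ((V ω, X ω), Y ω)) = H p (fun ω => (X ω, Y ω, V ω)) :=
    H_congr fun _ _ => by simp only [Prod.mk.injEq]; tauto
  have h₂ : H p (fun ω => ((V ω, X ω), Y ω, Z ω)) = H p (fun ω => (X ω, Y ω, Z ω, V ω)) :=
    H_congr fun _ _ => by simp only [Prod.mk.injEq]; tauto
  have h₃ : H p (fun ω => (Y ω, Z ω)) = H p (fun ω => (Z ω, Y ω)) :=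
    H_congr fun _ _ => by simp only [Prod.mk.injEq]; tauto
  have h₄ : H p (fun ω => (V ω, Y ω)) = H p (fun ω => (Y ω, V ω)) :=
    H_congr fun _ _ => by simp only [Prod.mk.injEq]; tauto
  have h₅ : H p (fun ω => (Y ω, Z ω, V ω)) = H p (fun ω => (Z ω, V ω, Y ω)) :=
    H_congr fun _ _ => by simp only [Prod.mk.injEq]; tauto
  simp only [CMI] at hXY_ZV hZV_Y ⊢
  linarith

end Secrecy

open Secrecy in
/-- for a degraded chain `V → X → Y → Z`,
`I(V;Y) - I(V;Z) ≤ I(X;Y) - I(X;Z)`. -/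
theorem stmt5 {Ω VT XT YT ZT : Type} [Fintype Ω] [Fintype VT] [Fintype XT]
    [Fintype YT] [Fintype ZT]
    (p : Ω → ℝ) (hp : IsPMF p) (V : Ω → VT) (X : Ω → XT) (Y : Ω → YT) (Z : Ω → ZT)
    (h1 : Markov p V X (fun ω => (Y ω, Z ω)))
    (h2 : Markov p (fun ω => (V ω, X ω)) Y Z) :
    MI p V Y - MI p V Z ≤ MI p X Y - MI p X Z := by
  have hY := (h1.comp_right Prod.fst).MI_eq_MI_add_CMI hp.1
  have hZ := (h1.comp_right Prod.snd).MI_eq_MI_add_CMI hp.1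
  have hdegraded := h2.CMI_le_CMI hp.1
  linarith
end

section
/- Suppose Y_1 is more capable than Z_3 (I(X;Y_1) ≥ I(X;Z_3) for all p(x)). Then for any joint distribution with Markov chain U_3 → V → X → (Y_1, Z_3), I(V;Y_1|U_3) - I(V;Z_3|U_3) ≤ I(X;Y_1|U_3) - I(X;Z_3|U_3). -/
open scoped BigOperators Classical

open Secrecy

/-- Joint pmf of `(U₃, V, X, (Y₁, Z₃))` given an input distribution `r(u₃,v,x)` and the
channel `W(y₁,z₃|x)`. -/
noncomputable def joint15 {U3T VT XT YT ZT : Type}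
    (r : U3T × VT × XT → ℝ) (W : XT → YT × ZT → ℝ) :
    U3T × VT × XT × (YT × ZT) → ℝ :=
  fun w => r (w.1, w.2.1, w.2.2.1) * W w.2.2.1 w.2.2.2

/- ===== Auxiliary machinery for stmt15 ===== -/

section Stmt15Aux

open Finset
set_option linter.unusedSectionVars false

/-- `nml` of a product. -/
lemma nml_mul (x y : ℝ) : nml (x * y) = y * nml x + x * nml y := by
  rcases eq_or_ne x 0 with hx | hx
  · simp [nml, hx]
  rcases eq_or_ne y 0 with hy | hy
  · simp [nml, hy]
  · simp [nml, Real.logb, Real.log_mul hx hy]; ring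

/-- Chain rule for the `nml`-sum of a product decomposition. -/
lemma chain_sum {A B : Type} [Fintype A] [Fintype B] (μ : A → ℝ) (K : A → B → ℝ)
    (hsum : ∀ a, μ a ≠ 0 → ∑ b, K a b = 1) :
    ∑ a, ∑ b, nml (μ a * K a b)
      = (∑ a, nml (μ a)) + ∑ a, μ a * ∑ b, nml (K a b) := by
  rw [← Finset.sum_add_distrib]
  refine Finset.sum_congr rfl fun a _ => ?_
  rcases eq_or_ne (μ a) 0 with h | h
  · simp [h, nml]
  · have hb : ∀ b, nml (μ a * K a b) = K a b * nml (μ a) + μ a * nml (K a b) :=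
      fun b => nml_mul _ _
    simp only [hb, Finset.sum_add_distrib, ← Finset.sum_mul, ← Finset.mul_sum, hsum a h]
    ring

/-- Computing a probability by summing over the fiber. -/
lemma sum_fiber {Ω I : Type} [Fintype Ω] [Fintype I] (p : Ω → ℝ) (s : Ω → Prop)
    (ι : I → Ω) (hinj : Function.Injective ι)
    (h1 : ∀ i, s (ι i)) (h2 : ∀ w, s w → ∃ i, ι i = w) :
    pr p s = ∑ i, p (ι i) := by
  have hset : Finset.univ.filter (fun w => s w) = Finset.univ.image ι := by
    ext w
    simp only [Finset.mem_filter, Finset.mem_image, Finset.mem_univ, true_and]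
    constructor
    · intro hw; obtain ⟨i, hi⟩ := h2 w hw; exact ⟨i, hi⟩
    · rintro ⟨i, rfl⟩; exact h1 i
  rw [pr, ← Finset.sum_filter, hset, Finset.sum_image (fun a _ b _ h => hinj h)]

variable {U3T VT XT YT ZT : Type} [Fintype U3T] [Fintype VT] [Fintype XT]
    [Fintype YT] [Fintype ZT]

/-- Marginal channel to `Y`. -/
noncomputable def Wy (W : XT → YT × ZT → ℝ) (x : XT) (y : YT) : ℝ := ∑ z, W x (y, z)

/-- Marginal channel to `Z`. -/
noncomputable def Wz (W : XT → YT × ZT → ℝ) (x : XT) (z : ZT) : ℝ := ∑ y, W x (y, z)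

/-- Marginal of `(X,U)`. -/
noncomputable def margXU (r : U3T × VT × XT → ℝ) (x : XT) (u : U3T) : ℝ := ∑ v, r (u, v, x)

/-- Marginal of `(U,V)`. -/
noncomputable def margUV (r : U3T × VT × XT → ℝ) (u : U3T) (v : VT) : ℝ := ∑ x, r (u, v, x)

/-- Marginal of `V`. -/
noncomputable def margV (r : U3T × VT × XT → ℝ) (v : VT) : ℝ := ∑ u, margUV r u v

/-- Marginal of `(V,X)`. -/
noncomputable def margVX (r : U3T × VT × XT → ℝ) (v : VT) (x : XT) : ℝ := ∑ u, r (u, v, x)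

/-- Marginal of `X`. -/
noncomputable def margX (r : U3T × VT × XT → ℝ) (x : XT) : ℝ := ∑ u, margXU r x u

/-- Conditional distribution of `X` given `V = v`. -/
noncomputable def condX (r : U3T × VT × XT → ℝ) (v : VT) (x : XT) : ℝ :=
  if margV r v = 0 then 0 else margVX r v x / margV r v

/-- Output distribution on `Y` for input distribution `q`. -/
noncomputable def outY (W : XT → YT × ZT → ℝ) (q : XT → ℝ) (y : YT) : ℝ :=
  ∑ x, q x * Wy W x y

/-- Output distribution on `Z` for input distribution `q`. -/
noncomputable def outZ (W : XT → YT × ZT → ℝ) (q : XT → ℝ) (z : ZT) : ℝ :=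
  ∑ x, q x * Wz W x z

variable (W : XT → YT × ZT → ℝ) (r : U3T × VT × XT → ℝ)

lemma sum_Wy (hW : IsChannel W) (x : XT) : ∑ y, Wy W x y = 1 := by
  have := hW.2 x
  rw [Fintype.sum_prod_type] at this
  simpa [Wy] using this

lemma sum_Wz (hW : IsChannel W) (x : XT) : ∑ z, Wz W x z = 1 := by
  have := hW.2 x
  rw [Fintype.sum_prod_type, Finset.sum_comm] at this
  simpa [Wz] using this

/- pr computations for `joint15 r W`. -/

lemma pr_XYU (x : XT) (y : YT) (u : U3T) :
    pr (joint15 r W) (fun w => (w.2.2.1, w.2.2.2.1, w.1) = (x, y, u))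
      = margXU r x u * Wy W x y := by
  rw [sum_fiber (joint15 r W) _ (fun i : VT × ZT => (u, i.1, x, (y, i.2)))]
  · rw [Fintype.sum_prod_type]
    simp only [joint15, margXU, Wy, ← Finset.mul_sum, Finset.sum_mul]
  · intro a b h; simpa [Prod.ext_iff] using h
  · intro i; simp
  · rintro ⟨a, b, c, d, e⟩ h
    simp only [Prod.mk.injEq] at h
    exact ⟨(b, e), by simp [h.1, h.2.1, h.2.2]⟩

lemma pr_XZU (x : XT) (z : ZT) (u : U3T) :
    pr (joint15 r W) (fun w => (w.2.2.1, w.2.2.2.2, w.1) = (x, z, u))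
      = margXU r x u * Wz W x z := by
  rw [sum_fiber (joint15 r W) _ (fun i : VT × YT => (u, i.1, x, (i.2, z)))]
  · rw [Fintype.sum_prod_type]
    simp only [joint15, margXU, Wz, ← Finset.mul_sum, Finset.sum_mul]
  · intro a b h; simpa [Prod.ext_iff] using h
  · intro i; simp
  · rintro ⟨a, b, c, d, e⟩ h
    simp only [Prod.mk.injEq] at h
    exact ⟨(b, d), by simp [h.1, h.2.1, h.2.2]⟩

lemma pr_VYU (v : VT) (y : YT) (u : U3T) :
    pr (joint15 r W) (fun w => (w.2.1, w.2.2.2.1, w.1) = (v, y, u))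
      = ∑ x, r (u, v, x) * Wy W x y := by
  rw [sum_fiber (joint15 r W) _ (fun i : XT × ZT => (u, v, i.1, (y, i.2)))]
  · rw [Fintype.sum_prod_type]
    simp only [joint15, Wy, ← Finset.mul_sum]
  · intro a b h; simpa [Prod.ext_iff] using h
  · intro i; simp
  · rintro ⟨a, b, c, d, e⟩ h
    simp only [Prod.mk.injEq] at h
    exact ⟨(c, e), by simp [h.1, h.2.1, h.2.2]⟩

lemma pr_VZU (v : VT) (z : ZT) (u : U3T) :
    pr (joint15 r W) (fun w => (w.2.1, w.2.2.2.2, w.1) = (v, z, u))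
      = ∑ x, r (u, v, x) * Wz W x z := by
  rw [sum_fiber (joint15 r W) _ (fun i : XT × YT => (u, v, i.1, (i.2, z)))]
  · rw [Fintype.sum_prod_type]
    simp only [joint15, Wz, ← Finset.mul_sum]
  · intro a b h; simpa [Prod.ext_iff] using h
  · intro i; simp
  · rintro ⟨a, b, c, d, e⟩ h
    simp only [Prod.mk.injEq] at h
    exact ⟨(c, d), by simp [h.1, h.2.1, h.2.2]⟩

lemma pr_UVX (hW : IsChannel W) (u : U3T) (v : VT) (x : XT) :
    pr (joint15 r W) (fun w => w.1 = u ∧ w.2.1 = v ∧ w.2.2.1 = x) = r (u, v, x) := by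
  rw [sum_fiber (joint15 r W) _ (fun d : YT × ZT => (u, v, x, d))]
  · simp only [joint15, ← Finset.mul_sum, hW.2, mul_one]
  · intro a b h; simpa [Prod.ext_iff] using h
  · intro i; simp
  · rintro ⟨a, b, c, d⟩ ⟨h1, h2, h3⟩
    exact ⟨d, by aesop⟩

lemma pr_V (hW : IsChannel W) (v : VT) :
    pr (joint15 r W) (fun w => w.2.1 = v) = margV r v := by
  rw [sum_fiber (joint15 r W) _ (fun i : U3T × XT × (YT × ZT) => (i.1, v, i.2.1, i.2.2))]
  · rw [Fintype.sum_prod_type]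
    simp only [joint15, Fintype.sum_prod_type, ← Finset.mul_sum, hW.2, mul_one,
      margV, margUV]
  · intro a b h; simpa [Prod.ext_iff] using h
  · intro i; simp
  · rintro ⟨a, b, c, d⟩ h
    exact ⟨(a, c, d), by aesop⟩

lemma pr_UV (hW : IsChannel W) (u : U3T) (v : VT) :
    pr (joint15 r W) (fun w => w.1 = u ∧ w.2.1 = v) = margUV r u v := by
  rw [sum_fiber (joint15 r W) _ (fun i : XT × (YT × ZT) => (u, v, i.1, i.2))]
  · rw [Fintype.sum_prod_type]
    simp only [joint15, ← Finset.mul_sum, hW.2, mul_one, margUV]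
  · intro a b h; simpa [Prod.ext_iff] using h
  · intro i; simp
  · rintro ⟨a, b, c, d⟩ ⟨h1, h2⟩
    exact ⟨(c, d), by aesop⟩

lemma pr_VX (hW : IsChannel W) (v : VT) (x : XT) :
    pr (joint15 r W) (fun w => w.2.1 = v ∧ w.2.2.1 = x) = margVX r v x := by
  rw [sum_fiber (joint15 r W) _ (fun i : U3T × (YT × ZT) => (i.1, v, x, i.2))]
  · rw [Fintype.sum_prod_type]
    simp only [joint15, ← Finset.mul_sum, hW.2, mul_one, margVX]
  · intro a b h; simpa [Prod.ext_iff] using h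
  · intro i; simp
  · rintro ⟨a, b, c, d⟩ ⟨h1, h2⟩
    exact ⟨(a, d), by aesop⟩

/- Markov chain consequences. -/

lemma markov_eq (hW : IsChannel W)
    (hMarkov : Markov (joint15 r W) (fun w => w.1) (fun w => w.2.1) (fun w => w.2.2.1))
    (u : U3T) (v : VT) (x : XT) :
    r (u, v, x) * margV r v = margUV r u v * margVX r v x := by
  have h := hMarkov u v x
  rwa [pr_UVX W r hW, pr_V W r hW, pr_UV W r hW, pr_VX W r hW] at h

lemma margV_zero (hr : IsPMF r) {v : VT} (h : margV r v = 0) (u : U3T) (x : XT) :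
    r (u, v, x) = 0 := by
  have h1 : ∑ u, ∑ x, r (u, v, x) = 0 := by simpa [margV, margUV] using h
  have h2 : ∑ x, r (u, v, x) = 0 :=
    (Finset.sum_eq_zero_iff_of_nonneg
      (fun i _ => Finset.sum_nonneg fun j _ => hr.1 _)).1 h1 u (Finset.mem_univ u)
  exact (Finset.sum_eq_zero_iff_of_nonneg fun j _ => hr.1 _).1 h2 x (Finset.mem_univ x)

lemma margUV_zero (hr : IsPMF r) {v : VT} (h : margV r v = 0) (u : U3T) :
    margUV r u v = 0 := by
  rw [margUV]
  exact Finset.sum_eq_zero fun x _ => margV_zero r hr h u x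

lemma r_decomp (hW : IsChannel W) (hr : IsPMF r)
    (hMarkov : Markov (joint15 r W) (fun w => w.1) (fun w => w.2.1) (fun w => w.2.2.1))
    (u : U3T) (v : VT) (x : XT) :
    r (u, v, x) = margUV r u v * condX r v x := by
  by_cases h : margV r v = 0
  · simp [condX, h, margV_zero r hr h u x]
  · rw [condX, if_neg h, ← mul_div_assoc, eq_div_iff h]
    exact markov_eq W r hW hMarkov u v x

lemma margV_nonneg (hr : IsPMF r) (v : VT) : 0 ≤ margV r v :=
  Finset.sum_nonneg fun u _ => Finset.sum_nonneg fun x _ => hr.1 _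

lemma condX_nonneg (hr : IsPMF r) (v : VT) (x : XT) : 0 ≤ condX r v x := by
  rw [condX]
  split
  · exact le_refl 0
  · exact div_nonneg (Finset.sum_nonneg fun u _ => hr.1 _) (margV_nonneg r hr v)

lemma sum_margVX (v : VT) : ∑ x, margVX r v x = margV r v := by
  rw [margV]
  simp only [margVX, margUV]
  exact Finset.sum_comm

lemma sum_condX {v : VT} (h : margV r v ≠ 0) : ∑ x, condX r v x = 1 := by
  simp only [condX, if_neg h, ← Finset.sum_div, sum_margVX, div_self h]

lemma condX_pmf (hr : IsPMF r) {v : VT} (h : margV r v ≠ 0) : IsPMF (condX r v) :=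
  ⟨condX_nonneg r hr v, sum_condX r h⟩

lemma sum_condX_mul (hr : IsPMF r) (x : XT) :
    ∑ v, margV r v * condX r v x = margX r x := by
  have h1 : ∀ v, margV r v * condX r v x = margVX r v x := by
    intro v
    by_cases h : margV r v = 0
    · simp [h, condX, margVX, fun u => margV_zero r hr h u x]
    · rw [condX, if_neg h, mul_div_cancel₀ _ h]
  rw [Finset.sum_congr rfl fun v _ => h1 v]
  simp only [margVX, margX, margXU]
  exact Finset.sum_comm

lemma sum_outY (hW : IsChannel W) {q : XT → ℝ} (hq : ∑ x, q x = 1) :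
    ∑ y, outY W q y = 1 := by
  simp only [outY]
  rw [Finset.sum_comm]
  calc ∑ x, ∑ y, q x * Wy W x y = ∑ x, q x * ∑ y, Wy W x y := by
        simp only [Finset.mul_sum]
    _ = 1 := by
        rw [Finset.sum_congr rfl fun x _ => by rw [sum_Wy W hW x, mul_one], hq]

lemma sum_outZ (hW : IsChannel W) {q : XT → ℝ} (hq : ∑ x, q x = 1) :
    ∑ z, outZ W q z = 1 := by
  simp only [outZ]
  rw [Finset.sum_comm]
  calc ∑ x, ∑ z, q x * Wz W x z = ∑ x, q x * ∑ z, Wz W x z := by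
        simp only [Finset.mul_sum]
    _ = 1 := by
        rw [Finset.sum_congr rfl fun x _ => by rw [sum_Wz W hW x, mul_one], hq]

/- Entropy computations for the four triples. -/

lemma H_XYU (hW : IsChannel W) :
    H (joint15 r W) (fun w => (w.2.2.1, w.2.2.2.1, w.1))
      = (∑ x, ∑ u, nml (margXU r x u)) + ∑ x, margX r x * ∑ y, nml (Wy W x y) := by
  simp only [H, Fintype.sum_prod_type, pr_XYU W r]
  rw [← Finset.sum_add_distrib]
  refine Finset.sum_congr rfl fun x _ => ?_
  rw [Finset.sum_comm,
    chain_sum (fun u => margXU r x u) (fun _ y => Wy W x y) (fun u _ => sum_Wy W hW x),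
    margX, Finset.sum_mul]

lemma H_XZU (hW : IsChannel W) :
    H (joint15 r W) (fun w => (w.2.2.1, w.2.2.2.2, w.1))
      = (∑ x, ∑ u, nml (margXU r x u)) + ∑ x, margX r x * ∑ z, nml (Wz W x z) := by
  simp only [H, Fintype.sum_prod_type, pr_XZU W r]
  rw [← Finset.sum_add_distrib]
  refine Finset.sum_congr rfl fun x _ => ?_
  rw [Finset.sum_comm,
    chain_sum (fun u => margXU r x u) (fun _ z => Wz W x z) (fun u _ => sum_Wz W hW x),
    margX, Finset.sum_mul]

lemma H_VYU (hW : IsChannel W) (hr : IsPMF r)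
    (hMarkov : Markov (joint15 r W) (fun w => w.1) (fun w => w.2.1) (fun w => w.2.2.1)) :
    H (joint15 r W) (fun w => (w.2.1, w.2.2.2.1, w.1))
      = (∑ v, ∑ u, nml (margUV r u v))
        + ∑ v, margV r v * ∑ y, nml (outY W (condX r v) y) := by
  have key : ∀ u v y, (∑ x, r (u, v, x) * Wy W x y)
      = margUV r u v * outY W (condX r v) y := by
    intro u v y
    rw [outY, Finset.mul_sum]
    refine Finset.sum_congr rfl fun x _ => ?_
    rw [r_decomp W r hW hr hMarkov u v x, mul_assoc]
  simp only [H, Fintype.sum_prod_type, pr_VYU W r, key]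
  rw [← Finset.sum_add_distrib]
  refine Finset.sum_congr rfl fun v _ => ?_
  rw [Finset.sum_comm,
    chain_sum (fun u => margUV r u v) (fun _ y => outY W (condX r v) y)
      (fun u hu => sum_outY W hW (sum_condX r (fun h0 => hu (margUV_zero r hr h0 u)))),
    margV, Finset.sum_mul]

lemma H_VZU (hW : IsChannel W) (hr : IsPMF r)
    (hMarkov : Markov (joint15 r W) (fun w => w.1) (fun w => w.2.1) (fun w => w.2.2.1)) :
    H (joint15 r W) (fun w => (w.2.1, w.2.2.2.2, w.1))
      = (∑ v, ∑ u, nml (margUV r u v))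
        + ∑ v, margV r v * ∑ z, nml (outZ W (condX r v) z) := by
  have key : ∀ u v z, (∑ x, r (u, v, x) * Wz W x z)
      = margUV r u v * outZ W (condX r v) z := by
    intro u v z
    rw [outZ, Finset.mul_sum]
    refine Finset.sum_congr rfl fun x _ => ?_
    rw [r_decomp W r hW hr hMarkov u v x, mul_assoc]
  simp only [H, Fintype.sum_prod_type, pr_VZU W r, key]
  rw [← Finset.sum_add_distrib]
  refine Finset.sum_congr rfl fun v _ => ?_
  rw [Finset.sum_comm,
    chain_sum (fun u => margUV r u v) (fun _ z => outZ W (condX r v) z)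
      (fun u hu => sum_outZ W hW (sum_condX r (fun h0 => hu (margUV_zero r hr h0 u)))),
    margV, Finset.sum_mul]

/- pr and MI computations for the more-capable test pmf. -/

lemma pr_m_X (hW : IsChannel W) (q : XT → ℝ) (x : XT) :
    pr (fun w : XT × YT × ZT => q w.1 * W w.1 w.2) (fun w => w.1 = x) = q x := by
  rw [sum_fiber _ _ (fun d : YT × ZT => (x, d))]
  · simp only [← Finset.mul_sum, hW.2, mul_one]
  · intro a b h; simpa [Prod.ext_iff] using h
  · intro i; simp
  · rintro ⟨a, d⟩ h; exact ⟨d, by aesop⟩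

lemma pr_m_Y (q : XT → ℝ) (y : YT) :
    pr (fun w : XT × YT × ZT => q w.1 * W w.1 w.2) (fun w => w.2.1 = y)
      = outY W q y := by
  rw [sum_fiber _ _ (fun i : XT × ZT => (i.1, y, i.2))]
  · rw [Fintype.sum_prod_type]
    simp only [outY, Wy, ← Finset.mul_sum]
  · intro a b h; simpa [Prod.ext_iff] using h
  · intro i; simp
  · rintro ⟨a, b, c⟩ h; exact ⟨(a, c), by aesop⟩

lemma pr_m_Z (q : XT → ℝ) (z : ZT) :
    pr (fun w : XT × YT × ZT => q w.1 * W w.1 w.2) (fun w => w.2.2 = z)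
      = outZ W q z := by
  rw [sum_fiber _ _ (fun i : XT × YT => (i.1, i.2, z))]
  · rw [Fintype.sum_prod_type]
    simp only [outZ, Wz, ← Finset.mul_sum]
  · intro a b h; simpa [Prod.ext_iff] using h
  · intro i; simp
  · rintro ⟨a, b, c⟩ h; exact ⟨(a, b), by aesop⟩

lemma pr_m_XY (q : XT → ℝ) (t : XT × YT) :
    pr (fun w : XT × YT × ZT => q w.1 * W w.1 w.2) (fun w => (w.1, w.2.1) = t)
      = q t.1 * Wy W t.1 t.2 := by
  rw [sum_fiber _ _ (fun z : ZT => (t.1, t.2, z))]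
  · simp only [Wy, ← Finset.mul_sum]
  · intro a b h; simpa [Prod.ext_iff] using h
  · intro i; simp
  · rintro ⟨a, b, c⟩ h; exact ⟨c, by aesop⟩

lemma pr_m_XZ (q : XT → ℝ) (t : XT × ZT) :
    pr (fun w : XT × YT × ZT => q w.1 * W w.1 w.2) (fun w => (w.1, w.2.2) = t)
      = q t.1 * Wz W t.1 t.2 := by
  rw [sum_fiber _ _ (fun y : YT => (t.1, y, t.2))]
  · simp only [Wz, ← Finset.mul_sum]
  · intro a b h; simpa [Prod.ext_iff] using h
  · intro i; simp
  · rintro ⟨a, b, c⟩ h; exact ⟨b, by aesop⟩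

lemma MI_mY (hW : IsChannel W) (q : XT → ℝ) :
    MI (fun w : XT × YT × ZT => q w.1 * W w.1 w.2) (fun w => w.1) (fun w => w.2.1)
      = (∑ y, nml (outY W q y)) - ∑ x, q x * ∑ y, nml (Wy W x y) := by
  simp only [MI, H, pr_m_X W hW q, pr_m_Y W q, pr_m_XY W q]
  rw [Fintype.sum_prod_type]
  rw [chain_sum q (fun x y => Wy W x y) (fun x _ => sum_Wy W hW x)]
  ring

lemma MI_mZ (hW : IsChannel W) (q : XT → ℝ) :
    MI (fun w : XT × YT × ZT => q w.1 * W w.1 w.2) (fun w => w.1) (fun w => w.2.2)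
      = (∑ z, nml (outZ W q z)) - ∑ x, q x * ∑ z, nml (Wz W x z) := by
  simp only [MI, H, pr_m_X W hW q, pr_m_Z W q, pr_m_XZ W q]
  rw [Fintype.sum_prod_type]
  rw [chain_sum q (fun x z => Wz W x z) (fun x _ => sum_Wz W hW x)]
  ring

end Stmt15Aux

/-- if `Y₁` is more capable than `Z₃`, then for any joint distribution with
Markov chain `U₃ → V → X → (Y₁,Z₃)`,
`I(V;Y₁|U₃) - I(V;Z₃|U₃) ≤ I(X;Y₁|U₃) - I(X;Z₃|U₃)`. -/
theorem stmt15 {U3T VT XT YT ZT : Type} [Fintype U3T] [Fintype VT] [Fintype XT]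
    [Fintype YT] [Fintype ZT]
    (W : XT → YT × ZT → ℝ) (hW : IsChannel W) (hMC : MoreCapable W)
    (r : U3T × VT × XT → ℝ) (hr : IsPMF r)
    (hMarkov : Markov (joint15 r W) (fun w => w.1) (fun w => w.2.1) (fun w => w.2.2.1)) :
    CMI (joint15 r W) (fun w => w.2.1) (fun w => w.2.2.2.1) (fun w => w.1)
      - CMI (joint15 r W) (fun w => w.2.1) (fun w => w.2.2.2.2) (fun w => w.1)
    ≤ CMI (joint15 r W) (fun w => w.2.2.1) (fun w => w.2.2.2.1) (fun w => w.1)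
      - CMI (joint15 r W) (fun w => w.2.2.1) (fun w => w.2.2.2.2) (fun w => w.1) := by

  have hXYU := H_XYU W r hW
  have hXZU := H_XZU W r hW
  have hVYU := H_VYU W r hW hr hMarkov
  have hVZU := H_VZU W r hW hr hMarkov
  have key : ∑ x, margX r x * ∑ y, nml (Wy W x y) - ∑ x, margX r x * ∑ z, nml (Wz W x z)
      ≤ ∑ v, margV r v * ∑ y, nml (outY W (condX r v) y)
        - ∑ v, margV r v * ∑ z, nml (outZ W (condX r v) z) := by
    have hper : ∀ v, margV r v *
          (∑ x, condX r v x * ((∑ y, nml (Wy W x y)) - ∑ z, nml (Wz W x z)))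
        ≤ margV r v * ((∑ y, nml (outY W (condX r v) y))
            - ∑ z, nml (outZ W (condX r v) z)) := by
      intro v
      by_cases h : margV r v = 0
      · simp [h]
      · have hpmf : IsPMF (condX r v) := condX_pmf r hr h
        have hmc := hMC (condX r v) hpmf
        rw [MI_mY W hW (condX r v), MI_mZ W hW (condX r v)] at hmc
        have hexp : ∑ x, condX r v x * ((∑ y, nml (Wy W x y)) - ∑ z, nml (Wz W x z))
            = (∑ x, condX r v x * ∑ y, nml (Wy W x y))
              - ∑ x, condX r v x * ∑ z, nml (Wz W x z) := by
          rw [← Finset.sum_sub_distrib]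
          exact Finset.sum_congr rfl fun x _ => mul_sub _ _ _
        have h2 : ∑ x, condX r v x * ((∑ y, nml (Wy W x y)) - ∑ z, nml (Wz W x z))
            ≤ (∑ y, nml (outY W (condX r v) y)) - ∑ z, nml (outZ W (condX r v) z) := by
          rw [hexp]; linarith
        exact mul_le_mul_of_nonneg_left h2 (margV_nonneg r hr v)
    have step1 : ∑ x, margX r x * ∑ y, nml (Wy W x y)
          - ∑ x, margX r x * ∑ z, nml (Wz W x z)
        = ∑ v, margV r v *
            (∑ x, condX r v x * ((∑ y, nml (Wy W x y)) - ∑ z, nml (Wz W x z))) := by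
      rw [← Finset.sum_sub_distrib]
      have e1 : ∀ x, margX r x * (∑ y, nml (Wy W x y)) - margX r x * (∑ z, nml (Wz W x z))
          = margX r x * ((∑ y, nml (Wy W x y)) - ∑ z, nml (Wz W x z)) :=
        fun x => (mul_sub _ _ _).symm
      rw [Finset.sum_congr rfl fun x _ => e1 x]
      have e2 : ∀ x, margX r x * ((∑ y, nml (Wy W x y)) - ∑ z, nml (Wz W x z))
          = ∑ v, margV r v * condX r v x * ((∑ y, nml (Wy W x y)) - ∑ z, nml (Wz W x z)) := by
        intro x
        rw [← Finset.sum_mul, sum_condX_mul r hr x]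
      rw [Finset.sum_congr rfl fun x _ => e2 x, Finset.sum_comm]
      refine Finset.sum_congr rfl fun v _ => ?_
      rw [Finset.mul_sum]
      exact Finset.sum_congr rfl fun x _ => by ring
    have step2 : ∑ v, margV r v * ((∑ y, nml (outY W (condX r v) y))
            - ∑ z, nml (outZ W (condX r v) z))
        = ∑ v, margV r v * ∑ y, nml (outY W (condX r v) y)
          - ∑ v, margV r v * ∑ z, nml (outZ W (condX r v) z) := by
      rw [← Finset.sum_sub_distrib]
      exact Finset.sum_congr rfl fun v _ => mul_sub _ _ _
    calc _ = _ := step1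
      _ ≤ _ := Finset.sum_le_sum fun v _ => hper v
      _ = _ := step2
  simp only [CMI]
  linarith [hXYU, hXZU, hVYU, hVZU, key]
end
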